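/- For a circular convolution with 1 input channel and m output channels with kernels f^(l), the largest singular value σ₁ satisfies sqrt(Σ_l (Σᵢ fᵢ^(l))²) ≤ σ₁ ≤ sqrt(Σ_l (Σᵢ |fᵢ^(l)|)²), with equality throughout when all kernel entries are nonnegative. -/

import Mathlib

open Matrix

/-- The largest singular value (spectral norm) of a real matrix, as the operator
norm of the induced linear map between Euclidean spaces. -/
noncomputable def matSpectralNorm {α β : Type*} [Fintype α] [Fintype β] [DecidableEq β]
    (M : Matrix α β ℝ) : ℝ :=
  ‖LinearMap.toContinuousLinearMap (Matrix.toEuclideanLin M)‖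

section aux

variable {n k : ℕ} [NeZero n]

lemma aux_shift_right (g : ℕ → ℝ) (p : Fin n) :
    ∑ q : Fin n, g ((q - p : Fin n) : ℕ) = ∑ j : Fin n, g (j : ℕ) :=
  Fintype.sum_equiv (Equiv.subRight p) _ _ (fun _ => rfl)

lemma aux_shift_left (g : ℕ → ℝ) (q : Fin n) :
    ∑ p : Fin n, g ((q - p : Fin n) : ℕ) = ∑ j : Fin n, g (j : ℕ) :=
  Fintype.sum_equiv (Equiv.subLeft q) _ _ (fun _ => rfl)

lemma aux_cut (hkn : k ≤ n) (g : ℕ → ℝ) (hg : ∀ j, k ≤ j → g j = 0) :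
    ∑ j : Fin n, g (j : ℕ) = ∑ i : Fin k, g (i : ℕ) := by
  rw [Fin.sum_univ_eq_sum_range (fun j => g j) n, Fin.sum_univ_eq_sum_range (fun j => g j) k]
  exact (Finset.sum_subset (Finset.range_subset_range.mpr hkn)
    (fun j _ hj => hg j (le_of_not_gt (fun h => hj (Finset.mem_range.mpr h))))).symm

end aux

/-- For a circular convolution with 1 input channel and `m` output channels with
kernels `f⁽ˡ⁾`, the largest singular value `σ₁` satisfies
`sqrt(Σ_l (Σᵢ fᵢ⁽ˡ⁾)²) ≤ σ₁ ≤ sqrt(Σ_l (Σᵢ |fᵢ⁽ˡ⁾|)²)`, with equality throughout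
when all kernel entries are nonnegative. -/
theorem stmt_13 {n k m : ℕ} [NeZero n] (hkn : k ≤ n) (f : Fin m → Fin k → ℝ)
    (fe : Fin m → ℕ → ℝ)
    (hfe : ∀ l j, fe l j = if h : j < k then f l ⟨j, h⟩ else 0)
    (M : Matrix (Fin m × Fin n) (Fin n) ℝ)
    (hM : ∀ l p q, M (l, p) q = fe l ((q - p : Fin n) : ℕ)) :
    Real.sqrt (∑ l : Fin m, (∑ i : Fin k, f l i) ^ 2) ≤ matSpectralNorm M ∧
      matSpectralNorm M ≤ Real.sqrt (∑ l : Fin m, (∑ i : Fin k, |f l i|) ^ 2) ∧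
      ((∀ l i, 0 ≤ f l i) →
        matSpectralNorm M = Real.sqrt (∑ l : Fin m, (∑ i : Fin k, f l i) ^ 2)) := by
  set T := LinearMap.toContinuousLinearMap (Matrix.toEuclideanLin M) with hTdef
  have hT : ∀ (x : EuclideanSpace ℝ (Fin n)) (lp : Fin m × Fin n),
      T x lp = ∑ q : Fin n, M lp q * x q := fun x lp => rfl
  have hnorm : ∀ (x : EuclideanSpace ℝ (Fin n)), ‖x‖ = Real.sqrt (∑ q : Fin n, (x q) ^ 2) := by
    intro x
    rw [EuclideanSpace.norm_eq]
    congr 1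
    exact Finset.sum_congr rfl fun q _ => by rw [Real.norm_eq_abs, sq_abs]
  have hTnorm : ∀ (x : EuclideanSpace ℝ (Fin n)),
      ‖T x‖ = Real.sqrt (∑ lp : Fin m × Fin n, (∑ q : Fin n, M lp q * x q) ^ 2) := by
    intro x
    rw [EuclideanSpace.norm_eq]
    congr 1
    exact Finset.sum_congr rfl fun lp _ => by rw [hT, Real.norm_eq_abs, sq_abs]
  -- sums of fe over Fin n
  have hzero : ∀ l j, k ≤ j → fe l j = 0 := by
    intro l j hj; rw [hfe]; exact dif_neg (not_lt.mpr hj)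
  have hzeroabs : ∀ l j, k ≤ j → |fe l j| = 0 := by
    intro l j hj; rw [hzero l j hj, abs_zero]
  have hfek : ∀ l (i : Fin k), fe l (i : ℕ) = f l i := by
    intro l i; rw [hfe]; exact (dif_pos i.isLt).trans (by congr 1)
  have hsum : ∀ l, ∑ j : Fin n, fe l (j : ℕ) = ∑ i : Fin k, f l i := by
    intro l
    rw [aux_cut hkn (fe l) (hzero l)]
    exact Finset.sum_congr rfl fun i _ => hfek l i
  have hsumabs : ∀ l, ∑ j : Fin n, |fe l (j : ℕ)| = ∑ i : Fin k, |f l i| := by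
    intro l
    rw [aux_cut hkn (fun j => |fe l j|) (hzeroabs l)]
    exact Finset.sum_congr rfl fun i _ => by rw [hfek l i]
  have hS_nonneg : (0:ℝ) ≤ ∑ l : Fin m, (∑ i : Fin k, f l i) ^ 2 :=
    Finset.sum_nonneg fun l _ => sq_nonneg _
  -- Lower bound
  have hlow : Real.sqrt (∑ l : Fin m, (∑ i : Fin k, f l i) ^ 2) ≤ matSpectralNorm M := by
    set x : EuclideanSpace ℝ (Fin n) := (WithLp.equiv 2 (Fin n → ℝ)).symm (fun _ => 1) with hx
    have hxq : ∀ q : Fin n, x q = 1 := fun q => rfl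
    have hxnorm : ‖x‖ = Real.sqrt n := by
      rw [hnorm]
      simp [hxq]
    have hTx : ‖T x‖ = Real.sqrt ((n : ℝ) * ∑ l : Fin m, (∑ i : Fin k, f l i) ^ 2) := by
      rw [hTnorm]
      congr 1
      rw [Fintype.sum_prod_type]
      have : ∀ (l : Fin m) (p : Fin n),
          (∑ q : Fin n, M (l, p) q * x q) = ∑ i : Fin k, f l i := by
        intro l p
        simp only [hxq, mul_one, hM]
        rw [aux_shift_right (fe l) p, hsum l]
      simp only [this, Finset.sum_const, Finset.card_univ, Fintype.card_fin, nsmul_eq_mul,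
        ← Finset.sum_mul, Finset.sum_const]
      rw [Finset.mul_sum]
    have hle := T.le_opNorm x
    rw [hTx, hxnorm, Real.sqrt_mul (Nat.cast_nonneg n)] at hle
    have hn : (0:ℝ) < Real.sqrt n := Real.sqrt_pos.mpr (by exact_mod_cast Nat.pos_of_ne_zero (NeZero.ne n))
    calc Real.sqrt (∑ l : Fin m, (∑ i : Fin k, f l i) ^ 2)
        = Real.sqrt n * Real.sqrt (∑ l : Fin m, (∑ i : Fin k, f l i) ^ 2) / Real.sqrt n := by
          field_simp
      _ ≤ Real.sqrt n * matSpectralNorm M / Real.sqrt n := by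
          apply div_le_div_of_nonneg_right _ hn.le
          calc Real.sqrt n * Real.sqrt (∑ l : Fin m, (∑ i : Fin k, f l i) ^ 2)
              ≤ ‖T‖ * Real.sqrt n := hle
            _ = Real.sqrt n * matSpectralNorm M := by rw [mul_comm]; rfl
      _ = matSpectralNorm M := by field_simp
  -- Upper bound
  have hup : matSpectralNorm M ≤ Real.sqrt (∑ l : Fin m, (∑ i : Fin k, |f l i|) ^ 2) := by
    apply ContinuousLinearMap.opNorm_le_bound _ (Real.sqrt_nonneg _)
    intro x
    rw [hTnorm, hnorm, ← Real.sqrt_mul (Finset.sum_nonneg fun l _ => sq_nonneg _)]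
    apply Real.sqrt_le_sqrt
    rw [Fintype.sum_prod_type, Finset.sum_mul]
    apply Finset.sum_le_sum
    intro l _
    have hrowabs : ∀ p : Fin n, ∑ q : Fin n, |M (l, p) q| = ∑ i : Fin k, |f l i| := by
      intro p
      simp only [hM]
      rw [aux_shift_right (fun j => |fe l j|) p, hsumabs l]
    have hcolabs : ∀ q : Fin n, ∑ p : Fin n, |M (l, p) q| = ∑ i : Fin k, |f l i| := by
      intro q
      simp only [hM]
      rw [aux_shift_left (fun j => |fe l j|) q, hsumabs l]
    have key : ∀ p : Fin n, (∑ q : Fin n, M (l, p) q * x q) ^ 2 ≤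
        (∑ i : Fin k, |f l i|) * ∑ q : Fin n, |M (l, p) q| * (x q) ^ 2 := by
      intro p
      have h1 : (∑ q : Fin n, M (l, p) q * x q) ^ 2 ≤
          (∑ q : Fin n, |M (l, p) q| * |x q|) ^ 2 := by
        rw [← sq_abs]
        apply pow_le_pow_left₀ (abs_nonneg _)
        calc |∑ q : Fin n, M (l, p) q * x q| ≤ ∑ q : Fin n, |M (l, p) q * x q| :=
              Finset.abs_sum_le_sum_abs _ _
          _ = ∑ q : Fin n, |M (l, p) q| * |x q| := by
              exact Finset.sum_congr rfl fun q _ => abs_mul _ _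
      have h2 : (∑ q : Fin n, |M (l, p) q| * |x q|) ^ 2 ≤
          (∑ q : Fin n, |M (l, p) q|) * ∑ q : Fin n, |M (l, p) q| * (x q) ^ 2 :=
        Finset.sum_sq_le_sum_mul_sum_of_sq_eq_mul Finset.univ
          (fun q _ => abs_nonneg _)
          (fun q _ => mul_nonneg (abs_nonneg _) (sq_nonneg _))
          (fun q _ => by rw [mul_pow, sq_abs, sq_abs, pow_two, ← abs_mul_abs_self]; ring)
      refine h1.trans (h2.trans_eq ?_)
      rw [hrowabs p]
    calc ∑ p : Fin n, (∑ q : Fin n, M (l, p) q * x q) ^ 2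
        ≤ ∑ p : Fin n, (∑ i : Fin k, |f l i|) * ∑ q : Fin n, |M (l, p) q| * (x q) ^ 2 :=
          Finset.sum_le_sum fun p _ => key p
      _ = (∑ i : Fin k, |f l i|) * ∑ q : Fin n, (∑ p : Fin n, |M (l, p) q|) * (x q) ^ 2 := by
          rw [← Finset.mul_sum]
          congr 1
          rw [Finset.sum_comm]
          exact Finset.sum_congr rfl fun q _ => (Finset.sum_mul _ _ _).symm
      _ = (∑ i : Fin k, |f l i|) * ∑ q : Fin n, (∑ i : Fin k, |f l i|) * (x q) ^ 2 := by
          congr 1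
          exact Finset.sum_congr rfl fun q _ => by rw [hcolabs q]
      _ = (∑ i : Fin k, |f l i|) ^ 2 * ∑ q : Fin n, (x q) ^ 2 := by
          rw [← Finset.mul_sum]; ring
  refine ⟨hlow, hup, fun hpos => ?_⟩
  apply le_antisymm _ hlow
  have : (∑ l : Fin m, (∑ i : Fin k, |f l i|) ^ 2) = ∑ l : Fin m, (∑ i : Fin k, f l i) ^ 2 := by
    refine Finset.sum_congr rfl fun l _ => ?_
    congr 1
    exact Finset.sum_congr rfl fun i _ => abs_of_nonneg (hpos l i)
  rw [← this]; exact hup
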